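/- The rate of growth of the sequence d ↦ a(d) equals 2n+1; that is, the smallest nonnegative integer c for which there exists a constant C > 0 with a(d) ≤ C·d^(c-1) for all integers d ≥ 1 is c = 2n+1. (This is the arithmetic content of the statement that the complexity of every atypical simple osp(2|2n)-module equals 2n+1.) -/
import Mathlib


/-- The Weyl dimension formula value `W(n,r)`: the dimension of the simple
`sp(2n,ℂ)`-module of highest weight `(r,0,…,0)`. -/
noncomputable def W (n r : ℕ) : ℚ :=
  ((2 * n + 2 * r : ℚ) *
      ∏ j ∈ Finset.Icc 2 n, (((r : ℚ) + (j : ℚ) - 1) * ((2 * n : ℚ) + (r : ℚ) - (j : ℚ) + 1))) /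
  ((2 * n : ℚ) * ∏ j ∈ Finset.Icc 2 n, (((j : ℚ) - 1) * ((2 * n : ℚ) - (j : ℚ) + 1)))

/-- `g(i) = W(n,i)` for `i ≥ 0` and `g(i) = W(n,-1-i)` for `i < 0`. -/
noncomputable def g (n : ℕ) (i : ℤ) : ℚ :=
  if 0 ≤ i then W n i.toNat else W n (-1 - i).toNat

/-- `a(d) = Σ_{i ∈ I_d} 2^(2n)·(g(i) + g(i-1))` where
`I_d = {i ∈ ℤ : |i| ≤ d, i ≡ d (mod 2)}`: the dimension of the `d`-th term of the
minimal projective resolution of the trivial `osp(2|2n)`-module. -/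
noncomputable def a (n d : ℕ) : ℚ :=
  ∑ i ∈ (Finset.Icc (-(d : ℤ)) (d : ℤ)).filter (fun i => i % 2 = (d : ℤ) % 2),
    2 ^ (2 * n) * (g n i + g n (i - 1))

noncomputable def Dd (n : ℕ) : ℚ :=
  (2 * n : ℚ) * ∏ j ∈ Finset.Icc 2 n, (((j : ℚ) - 1) * ((2 * n : ℚ) - (j : ℚ) + 1))

lemma W_eq (n r : ℕ) : W n r =
    ((2 * n + 2 * r : ℚ) *
      ∏ j ∈ Finset.Icc 2 n, (((r : ℚ) + (j : ℚ) - 1) * ((2 * n : ℚ) + (r : ℚ) - (j : ℚ) + 1)))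
    / Dd n := rfl

lemma Dd_pos {n : ℕ} (hn : 1 ≤ n) : 0 < Dd n := by
  have hn' : (1:ℚ) ≤ n := by exact_mod_cast hn
  apply mul_pos (by positivity)
  apply Finset.prod_pos
  intro j hj
  simp only [Finset.mem_Icc] at hj
  have h2 : (2:ℚ) ≤ j := by exact_mod_cast hj.1
  have h3 : (j:ℚ) ≤ n := by exact_mod_cast hj.2
  nlinarith

lemma W_pos {n : ℕ} (hn : 1 ≤ n) (r : ℕ) : 0 < W n r := by
  have hn' : (1:ℚ) ≤ n := by exact_mod_cast hn
  have hr : (0:ℚ) ≤ r := by positivity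
  rw [W_eq]
  apply div_pos _ (Dd_pos hn)
  apply mul_pos (by nlinarith)
  apply Finset.prod_pos
  intro j hj
  simp only [Finset.mem_Icc] at hj
  have h2 : (2:ℚ) ≤ j := by exact_mod_cast hj.1
  have h3 : (j:ℚ) ≤ n := by exact_mod_cast hj.2
  nlinarith

lemma W_lb {n : ℕ} (hn : 1 ≤ n) (r : ℕ) :
    2 / Dd n * (r : ℚ) ^ (2 * n - 1) ≤ W n r := by
  have hD := Dd_pos hn
  have hn' : (1:ℚ) ≤ n := by exact_mod_cast hn
  have hr : (0:ℚ) ≤ r := by positivity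
  have hprod : ((r:ℚ) ^ 2) ^ (n - 1) ≤
      ∏ j ∈ Finset.Icc 2 n, (((r : ℚ) + (j : ℚ) - 1) * ((2 * n : ℚ) + (r : ℚ) - (j : ℚ) + 1)) := by
    have hcard : (Finset.Icc 2 n).card = n - 1 := by rw [Nat.card_Icc]; omega
    calc ((r:ℚ)^2)^(n-1) = ∏ _j ∈ Finset.Icc 2 n, (r:ℚ)^2 := by
          rw [Finset.prod_const, hcard]
      _ ≤ _ := by
          apply Finset.prod_le_prod (fun j _ => by positivity)
          intro j hj
          simp only [Finset.mem_Icc] at hj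
          have h2 : (2:ℚ) ≤ j := by exact_mod_cast hj.1
          have h3 : (j:ℚ) ≤ n := by exact_mod_cast hj.2
          nlinarith
  rw [W_eq, div_mul_eq_mul_div]
  gcongr ?_ / _
  calc 2 * (r:ℚ)^(2*n-1) = 2*(r:ℚ) * ((r:ℚ)^2)^(n-1) := by
        have he : 2*n-1 = 1 + 2*(n-1) := by omega
        rw [he, pow_add, pow_mul, pow_one]; ring
    _ ≤ _ := mul_le_mul (by nlinarith) hprod (by positivity) (by positivity)

lemma W_ub {n : ℕ} (hn : 1 ≤ n) (r : ℕ) :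
    W n r ≤ (2*n:ℚ)^(2*n-1) / Dd n * ((r:ℚ)+1) ^ (2 * n - 1) := by
  have hD := Dd_pos hn
  have hn' : (1:ℚ) ≤ n := by exact_mod_cast hn
  have hr : (0:ℚ) ≤ r := by positivity
  have hprod :
      (∏ j ∈ Finset.Icc 2 n, (((r : ℚ) + (j : ℚ) - 1) * ((2 * n : ℚ) + (r : ℚ) - (j : ℚ) + 1)))
        ≤ ((2*n*((r:ℚ)+1)) ^ 2) ^ (n - 1) := by
    have hcard : (Finset.Icc 2 n).card = n - 1 := by rw [Nat.card_Icc]; omega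
    calc (∏ j ∈ Finset.Icc 2 n, (((r : ℚ) + (j : ℚ) - 1) * ((2 * n : ℚ) + (r : ℚ) - (j : ℚ) + 1)))
        ≤ ∏ _j ∈ Finset.Icc 2 n, (2*n*((r:ℚ)+1))^2 := by
          apply Finset.prod_le_prod
          · intro j hj
            simp only [Finset.mem_Icc] at hj
            have h2 : (2:ℚ) ≤ j := by exact_mod_cast hj.1
            have h3 : (j:ℚ) ≤ n := by exact_mod_cast hj.2
            nlinarith
          · intro j hj
            simp only [Finset.mem_Icc] at hj
            have h2 : (2:ℚ) ≤ j := by exact_mod_cast hj.1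
            have h3 : (j:ℚ) ≤ n := by exact_mod_cast hj.2
            have h4 : (r:ℚ) + j - 1 ≤ 2*n*((r:ℚ)+1) := by nlinarith
            have h5 : 2*(n:ℚ) + r - j + 1 ≤ 2*n*((r:ℚ)+1) := by nlinarith
            have h6 : (0:ℚ) ≤ (r:ℚ) + j - 1 := by nlinarith
            have h7 : (0:ℚ) ≤ 2*n*((r:ℚ)+1) := by positivity
            calc ((r:ℚ) + j - 1) * (2*(n:ℚ) + r - j + 1) ≤ (2*n*((r:ℚ)+1)) * (2*n*((r:ℚ)+1)) :=
                  mul_le_mul h4 h5 (by nlinarith) h7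
              _ = (2*n*((r:ℚ)+1))^2 := by ring
      _ = _ := by rw [Finset.prod_const, hcard]
  rw [W_eq, div_mul_eq_mul_div]
  gcongr ?_ / _
  calc (2 * n + 2 * r : ℚ) *
        ∏ j ∈ Finset.Icc 2 n, (((r : ℚ) + (j : ℚ) - 1) * ((2 * n : ℚ) + (r : ℚ) - (j : ℚ) + 1))
      ≤ (2*n*((r:ℚ)+1)) * ((2*n*((r:ℚ)+1)) ^ 2) ^ (n - 1) := by
        apply mul_le_mul (by nlinarith) hprod ?_ (by positivity)
        apply Finset.prod_nonneg
        intro j hj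
        simp only [Finset.mem_Icc] at hj
        have h2 : (2:ℚ) ≤ j := by exact_mod_cast hj.1
        have h3 : (j:ℚ) ≤ n := by exact_mod_cast hj.2
        nlinarith
    _ = (2*n:ℚ)^(2*n-1) * ((r:ℚ)+1)^(2*n-1) := by
        have he : 2*n-1 = 1 + 2*(n-1) := by omega
        have key : ((2*(n:ℚ)*((r:ℚ)+1))^2)^(n-1)
            = (((2*(n:ℚ))^2)^(n-1)) * ((((r:ℚ)+1)^2)^(n-1)) := by
          rw [mul_pow, mul_pow]
        rw [he, key]
        simp only [pow_add, pow_mul, pow_one]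
        ring


lemma W_ub' {n : ℕ} (hn : 1 ≤ n) (r : ℕ) {M : ℚ} (h : (r:ℚ) + 1 ≤ M) :
    W n r ≤ (2*n:ℚ)^(2*n-1) / Dd n * M ^ (2*n-1) := by
  refine (W_ub hn r).trans ?_
  have h0 : (0:ℚ) ≤ (r:ℚ)+1 := by positivity
  have hpow := pow_le_pow_left₀ h0 h (2*n-1)
  have hK : (0:ℚ) ≤ (2*n:ℚ)^(2*n-1) / Dd n :=
    div_nonneg (by positivity) (Dd_pos hn).le
  exact mul_le_mul_of_nonneg_left hpow hK

lemma g_pos {n : ℕ} (hn : 1 ≤ n) (i : ℤ) : 0 < g n i := by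
  unfold g; split <;> exact W_pos hn _

lemma g_ub {n : ℕ} (hn : 1 ≤ n) (i : ℤ) {M : ℚ} (h1 : (i:ℚ) + 1 ≤ M) (h2 : -(i:ℚ) ≤ M) :
    g n i ≤ (2*n:ℚ)^(2*n-1) / Dd n * M ^ (2*n-1) := by
  unfold g
  split
  case isTrue h =>
    apply W_ub' hn
    have : ((i.toNat : ℤ) : ℚ) = (i : ℚ) := by rw [Int.toNat_of_nonneg h]
    push_cast at this ⊢
    rw [this]; exact h1
  case isFalse h =>
    apply W_ub' hn
    have h' : (0:ℤ) ≤ -1 - i := by omega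
    have : (((-1 - i).toNat : ℤ) : ℚ) = ((-1 - i : ℤ) : ℚ) := by rw [Int.toNat_of_nonneg h']
    push_cast at this ⊢
    rw [this]; linarith

lemma a_ub {n : ℕ} (hn : 1 ≤ n) (d : ℕ) (hd : 1 ≤ d) :
    a n d ≤ 2^(2*n+1) * 3^(2*n) * ((2*n:ℚ)^(2*n-1) / Dd n) * (d:ℚ)^(2*n) := by
  have hD := Dd_pos hn
  set K : ℚ := (2*n:ℚ)^(2*n-1) / Dd n with hK
  have hK0 : 0 ≤ K := div_nonneg (by positivity) hD.le
  have hd1 : (1:ℚ) ≤ d := by exact_mod_cast hd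
  set B : ℚ := K * (3*(d:ℚ))^(2*n-1) with hB
  have hB0 : 0 ≤ B := mul_nonneg hK0 (by positivity)
  set s := (Finset.Icc (-(d:ℤ)) (d:ℤ)).filter (fun i => i % 2 = (d:ℤ) % 2) with hs
  have hstep : ∀ i ∈ s, 2^(2*n) * (g n i + g n (i-1)) ≤ 2^(2*n) * (2 * B) := by
    intro i hi
    simp only [hs, Finset.mem_filter, Finset.mem_Icc] at hi
    obtain ⟨⟨h1, h2⟩, _⟩ := hi
    have h1' : -((d:ℚ)) ≤ (i:ℚ) := by exact_mod_cast h1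
    have h2' : (i:ℚ) ≤ d := by exact_mod_cast h2
    have bg1 : g n i ≤ B := g_ub hn i (by linarith) (by linarith)
    have bg2 : g n (i-1) ≤ B := by
      refine g_ub hn (i-1) (M := 3*(d:ℚ)) ?_ ?_ <;> push_cast <;> linarith
    have hadd : g n i + g n (i-1) ≤ 2 * B := by linarith
    exact mul_le_mul_of_nonneg_left hadd (by positivity)
  have hcard : (s.card : ℚ) ≤ 3 * d := by
    have hc1 : s.card ≤ (Finset.Icc (-(d:ℤ)) (d:ℤ)).card := Finset.card_filter_le _ _
    rw [Int.card_Icc] at hc1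
    have hc2 : ((d:ℤ) + 1 - -(d:ℤ)).toNat = 2*d+1 := by omega
    rw [hc2] at hc1
    have : (s.card : ℚ) ≤ ((2*d+1 : ℕ) : ℚ) := by exact_mod_cast hc1
    push_cast at this
    linarith
  calc a n d ≤ ∑ _i ∈ s, 2^(2*n) * (2 * B) := Finset.sum_le_sum hstep
    _ = (s.card : ℚ) * (2^(2*n) * (2 * B)) := by rw [Finset.sum_const, nsmul_eq_mul]
    _ ≤ (3*(d:ℚ)) * (2^(2*n) * (2 * B)) := by
        apply mul_le_mul_of_nonneg_right hcard (by positivity)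
    _ = 2^(2*n+1) * 3^(2*n) * K * (d:ℚ)^(2*n) := by
        rw [hB]
        obtain ⟨m, hm⟩ : ∃ m, 2*n = m+1 := ⟨2*n-1, by omega⟩
        simp only [hm, Nat.add_sub_cancel]
        rw [mul_pow]
        ring

lemma a_lb {n : ℕ} (hn : 1 ≤ n) (d : ℕ) (hd : 1 ≤ d) :
    (d:ℚ)^(2*n) / Dd n ≤ a n d := by
  have hD := Dd_pos hn
  have hd1 : (1:ℚ) ≤ d := by exact_mod_cast hd
  set s := (Finset.Icc (-(d:ℤ)) (d:ℤ)).filter (fun i => i % 2 = (d:ℤ) % 2) with hs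
  set T := (Finset.range (d/4+1)).image (fun k : ℕ => (d:ℤ) - 2*k) with hT
  have hTs : T ⊆ s := by
    intro i hi
    simp only [hT, Finset.mem_image, Finset.mem_range] at hi
    obtain ⟨k, hk, rfl⟩ := hi
    simp only [hs, Finset.mem_filter, Finset.mem_Icc]
    refine ⟨⟨by omega, by omega⟩, by omega⟩
  have hnonneg : ∀ i ∈ s, 0 ≤ 2^(2*n) * (g n i + g n (i-1)) := by
    intro i _
    have p1 := g_pos hn i
    have p2 := g_pos hn (i-1)
    have : (0:ℚ) ≤ g n i + g n (i-1) := by linarith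
    positivity
  have h1 : ∑ i ∈ T, 2^(2*n) * (g n i + g n (i-1)) ≤ a n d :=
    Finset.sum_le_sum_of_subset_of_nonneg hTs (fun i hi _ => hnonneg i hi)
  have hinj : ∀ x ∈ Finset.range (d/4+1), ∀ y ∈ Finset.range (d/4+1),
      (d:ℤ) - 2*x = (d:ℤ) - 2*y → x = y := by
    intro x _ y _ h; omega
  rw [hT, Finset.sum_image hinj] at h1
  set B : ℚ := 2^(2*n) * (2 / Dd n * ((d:ℚ)/2)^(2*n-1)) with hB
  have hterm : ∀ k ∈ Finset.range (d/4+1),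
      B ≤ 2^(2*n) * (g n ((d:ℤ) - 2*k) + g n ((d:ℤ) - 2*k - 1)) := by
    intro k hk
    simp only [Finset.mem_range] at hk
    have hk' : k ≤ d/4 := by omega
    have hi0 : (0:ℤ) ≤ (d:ℤ) - 2*k := by omega
    have hgeq : g n ((d:ℤ) - 2*k) = W n ((d:ℤ) - 2*k).toNat := by
      unfold g; rw [if_pos hi0]
    have hcast : ((((d:ℤ) - 2*k).toNat : ℤ) : ℚ) = (d:ℚ) - 2*k := by
      rw [Int.toNat_of_nonneg hi0]; push_cast; ring
    push_cast at hcast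
    have hhalf : (d:ℚ)/2 ≤ ((((d:ℤ) - 2*k).toNat : ℕ) : ℚ) := by
      rw [hcast]
      have h4 : ((d/4 : ℕ) : ℚ) ≤ (d:ℚ)/4 := by
        have := Nat.div_mul_le_self d 4
        have h' : ((d/4*4 : ℕ) : ℚ) ≤ (d:ℚ) := by exact_mod_cast this
        push_cast at h'
        linarith
      have hk'' : ((k:ℕ) : ℚ) ≤ ((d/4 : ℕ) : ℚ) := by exact_mod_cast hk'
      linarith
    have hW := W_lb hn ((d:ℤ) - 2*k).toNat
    have hpow : ((d:ℚ)/2)^(2*n-1) ≤ ((((d:ℤ) - 2*k).toNat : ℕ) : ℚ)^(2*n-1) :=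
      pow_le_pow_left₀ (by positivity) hhalf _
    have hg2 := (g_pos hn ((d:ℤ) - 2*k - 1)).le
    have hchain : 2 / Dd n * ((d:ℚ)/2)^(2*n-1) ≤ g n ((d:ℤ) - 2*k) + g n ((d:ℤ) - 2*k - 1) := by
      have : 2 / Dd n * ((d:ℚ)/2)^(2*n-1) ≤ W n ((d:ℤ) - 2*k).toNat := by
        refine le_trans ?_ hW
        apply mul_le_mul_of_nonneg_left hpow
        positivity
      rw [hgeq]; linarith
    rw [hB]
    exact mul_le_mul_of_nonneg_left hchain (by positivity)
  have h2 : ∑ _k ∈ Finset.range (d/4+1), B ≤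
      ∑ k ∈ Finset.range (d/4+1), 2^(2*n) * (g n ((d:ℤ) - 2*k) + g n ((d:ℤ) - 2*k - 1)) :=
    Finset.sum_le_sum hterm
  have hBsum : ∑ _k ∈ Finset.range (d/4+1), B = ((d/4 : ℕ) + 1 : ℚ) * B := by
    rw [Finset.sum_const, Finset.card_range, nsmul_eq_mul]; push_cast; ring
  have hB0 : 0 ≤ B := by
    rw [hB]; positivity
  have hq : (d:ℚ)/4 ≤ ((d/4 : ℕ) : ℚ) + 1 := by
    have hlt : d < (d/4+1)*4 := by omega
    have h' : (d:ℚ) < ((d/4+1 : ℕ) : ℚ) * 4 := by exact_mod_cast hlt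
    push_cast at h'
    linarith
  have hBeq : (d:ℚ)^(2*n) / Dd n = ((d:ℚ)/4) * B := by
    rw [hB]
    obtain ⟨m, hm⟩ : ∃ m, 2*n = m+1 := ⟨2*n-1, by omega⟩
    simp only [hm, Nat.add_sub_cancel]
    rw [div_pow]
    field_simp
    ring
  calc (d:ℚ)^(2*n) / Dd n = ((d:ℚ)/4) * B := hBeq
    _ ≤ (((d/4 : ℕ) : ℚ) + 1) * B := mul_le_mul_of_nonneg_right hq hB0
    _ = ∑ _k ∈ Finset.range (d/4+1), B := hBsum.symm
    _ ≤ _ := h2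
    _ ≤ a n d := h1

/-- The rate of growth of `d ↦ a(d)` equals `2n+1`: the least natural number `c`
for which there is a constant `C > 0` with `a(d) ≤ C·d^(c-1)` for all `d ≥ 1`
is `c = 2n+1`. -/
theorem stmt_6 (n : ℕ) (hn : 1 ≤ n) :
    IsLeast {c : ℕ | ∃ C : ℚ, 0 < C ∧ ∀ d : ℕ, 1 ≤ d → a n d ≤ C * (d : ℚ) ^ ((c : ℤ) - 1)}
      (2 * n + 1) := by
  have hD := Dd_pos hn
  have h2n : (0:ℚ) < 2*(n:ℚ) := by
    have : (1:ℚ) ≤ n := by exact_mod_cast hn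
    linarith
  constructor
  · refine ⟨2^(2*n+1) * 3^(2*n) * ((2*n:ℚ)^(2*n-1) / Dd n), ?_, ?_⟩
    · exact mul_pos (by positivity) (div_pos (pow_pos h2n _) hD)
    · intro d hd
      have hexp : ((2*n+1 : ℕ) : ℤ) - 1 = ((2*n : ℕ) : ℤ) := by push_cast; ring
      rw [hexp, zpow_natCast]
      exact a_ub hn d hd
  · intro c hc
    by_contra hlt
    push_neg at hlt
    obtain ⟨C, hC, hb⟩ := hc
    set d : ℕ := max 1 (⌈C * Dd n⌉₊ + 1) with hdd
    have hd1 : 1 ≤ d := le_max_left _ _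
    have h1 := a_lb hn d hd1
    have h2 := hb d hd1
    have hd1' : (1:ℚ) ≤ (d:ℚ) := by exact_mod_cast hd1
    have hzp : (d:ℚ) ^ ((c:ℤ) - 1) ≤ (d:ℚ) ^ (((2*n:ℕ):ℤ) - 1) := by
      apply zpow_le_zpow_right₀ hd1'
      have : c ≤ 2*n := by omega
      have : (c:ℤ) ≤ ((2*n:ℕ):ℤ) := by exact_mod_cast this
      omega
    have hzp2 : (d:ℚ) ^ (((2*n:ℕ):ℤ) - 1) = (d:ℚ) ^ (2*n - 1 : ℕ) := by
      rw [← zpow_natCast]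
      congr 1
      push_cast
      omega
    have key : (d:ℚ)^(2*n) / Dd n ≤ C * (d:ℚ)^(2*n-1) := by
      calc (d:ℚ)^(2*n) / Dd n ≤ a n d := h1
        _ ≤ C * (d:ℚ) ^ ((c:ℤ) - 1) := h2
        _ ≤ C * (d:ℚ) ^ (((2*n:ℕ):ℤ) - 1) := mul_le_mul_of_nonneg_left hzp hC.le
        _ = C * (d:ℚ)^(2*n-1) := by rw [hzp2]
    have hdpos : (0:ℚ) < (d:ℚ)^(2*n-1) := by positivity
    have hle : (d:ℚ) ≤ C * Dd n := by
      have hexp : 2*n = (2*n-1)+1 := by omega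
      rw [hexp, pow_succ, div_le_iff₀ hD] at key
      simp only [Nat.add_sub_cancel] at key
      nlinarith [key, hdpos]
    have hgt : C * Dd n < (d:ℚ) := by
      have h3 : (⌈C * Dd n⌉₊ + 1 : ℕ) ≤ d := le_max_right _ _
      calc C * Dd n ≤ (⌈C * Dd n⌉₊ : ℚ) := Nat.le_ceil _
        _ < ((⌈C * Dd n⌉₊ + 1 : ℕ) : ℚ) := by push_cast; linarith
        _ ≤ d := by exact_mod_cast h3
    linarith
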